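/- Let S be a nondegenerate n-dimensional simplex contained in the unit cube Q_n. Then n ≤ Σ_{i=1}^{n} 1/d_i(S) = α(S) ≤ ξ(S); in particular ξ_n ≥ n. Moreover, if ξ(S) = n, then α(S) = n and d_i(S) = 1 for all i. -/

import Mathlib

open Set MeasureTheory Finset Metric

noncomputable section

/-- The unit cube `Q_n = [0,1]^n` in `ℝ^n`. -/
def unitCube (n : ℕ) : Set (EuclideanSpace ℝ (Fin n)) :=
  {x | ∀ i, x i ∈ Set.Icc (0 : ℝ) 1}

/-- The set of vertices of the unit cube `Q_n`. -/
def cubeVertices (n : ℕ) : Set (EuclideanSpace ℝ (Fin n)) :=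
  {x | ∀ i, x i = 0 ∨ x i = 1}

/-- The closed unit Euclidean ball `B_n` in `ℝ^n`. -/
def unitBall (n : ℕ) : Set (EuclideanSpace ℝ (Fin n)) :=
  Metric.closedBall 0 1

/-- Image of a set under the homothety with center `c` and ratio `σ`. -/
def homothet {n : ℕ} (c : EuclideanSpace ℝ (Fin n)) (σ : ℝ)
    (S : Set (EuclideanSpace ℝ (Fin n))) : Set (EuclideanSpace ℝ (Fin n)) :=
  (fun x => c + σ • (x - c)) '' S

/-- The simplex with vertex set `v` (its convex hull). -/
def simplexSet {n : ℕ} (v : Fin (n + 1) → EuclideanSpace ℝ (Fin n)) :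
    Set (EuclideanSpace ℝ (Fin n)) :=
  convexHull ℝ (Set.range v)

/-- The centroid (center of gravity) of the simplex with vertices `v`. -/
def simplexCentroid {n : ℕ} (v : Fin (n + 1) → EuclideanSpace ℝ (Fin n)) :
    EuclideanSpace ℝ (Fin n) :=
  Finset.univ.centroid ℝ v

/-- `σS`: homothetic copy of the simplex `S` with center at its centroid and ratio `σ`. -/
def simplexHomothet {n : ℕ} (v : Fin (n + 1) → EuclideanSpace ℝ (Fin n)) (σ : ℝ) :
    Set (EuclideanSpace ℝ (Fin n)) :=
  homothet (simplexCentroid v) σ (simplexSet v)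

/-- The absorption index `ξ(Ω;S)`: minimal `σ ≥ 1` with `Ω ⊆ σS`. -/
def xiInd {n : ℕ} (Ω : Set (EuclideanSpace ℝ (Fin n)))
    (v : Fin (n + 1) → EuclideanSpace ℝ (Fin n)) : ℝ :=
  sInf {σ : ℝ | 1 ≤ σ ∧ Ω ⊆ simplexHomothet v σ}

/-- `α(Ω;S)`: minimal `σ > 0` such that `Ω` is contained in a translate of `σS`. -/
def alphaInd {n : ℕ} (Ω : Set (EuclideanSpace ℝ (Fin n)))
    (v : Fin (n + 1) → EuclideanSpace ℝ (Fin n)) : ℝ :=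
  sInf {σ : ℝ | 0 < σ ∧ ∃ t : EuclideanSpace ℝ (Fin n),
    Ω ⊆ (fun x => t + x) '' simplexHomothet v σ}

/-- `lam` is the family of basic Lagrange polynomials of the simplex with vertices `v`:
affine maps with `lam j (v k) = δ_{jk}`. -/
def IsLagrangeBasis {n : ℕ} (v : Fin (n + 1) → EuclideanSpace ℝ (Fin n))
    (lam : Fin (n + 1) → (EuclideanSpace ℝ (Fin n) →ᵃ[ℝ] ℝ)) : Prop :=
  ∀ j k, lam j (v k) = if j = k then (1 : ℝ) else 0

/-- The `i`-th axial diameter of a set: maximal length of a segment contained in it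
and parallel to the `i`-th coordinate axis. -/
def axialDiameter {n : ℕ} (i : Fin n) (S : Set (EuclideanSpace ℝ (Fin n))) : ℝ :=
  sSup {t : ℝ | 0 ≤ t ∧ ∃ x, x ∈ S ∧ x + t • (EuclideanSpace.single i (1 : ℝ)) ∈ S}

/-- Norm of the interpolation projector with Lagrange basis `lam`, as an operator
`C(Ω) → C(Ω)`: it equals `max_{x ∈ Ω} Σ_j |λ_j(x)|`. -/
def projNorm {n : ℕ} (Ω : Set (EuclideanSpace ℝ (Fin n)))
    (lam : Fin (n + 1) → (EuclideanSpace ℝ (Fin n) →ᵃ[ℝ] ℝ)) : ℝ :=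
  sSup ((fun x => ∑ j, |lam j x|) '' Ω)

/-- `θ_n(Ω)`: the minimal norm of an interpolation projector with nodes in `Ω`. -/
def thetaMin (n : ℕ) (Ω : Set (EuclideanSpace ℝ (Fin n))) : ℝ :=
  sInf {t : ℝ | ∃ v : Fin (n + 1) → EuclideanSpace ℝ (Fin n),
    ∃ lam : Fin (n + 1) → (EuclideanSpace ℝ (Fin n) →ᵃ[ℝ] ℝ),
      AffineIndependent ℝ v ∧ (∀ j, v j ∈ Ω) ∧ IsLagrangeBasis v lam ∧
      t = projNorm Ω lam}

/-- `ξ_n`: minimal absorption index of the unit cube by a contained nondegenerate simplex. -/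
def xiMin (n : ℕ) : ℝ :=
  sInf {t : ℝ | ∃ v : Fin (n + 1) → EuclideanSpace ℝ (Fin n),
    AffineIndependent ℝ v ∧ simplexSet v ⊆ unitCube n ∧ t = xiInd (unitCube n) v}

/-- The standardized Legendre polynomial `χ_n` (Rodrigues formula). -/
def legendreChi (n : ℕ) (t : ℝ) : ℝ :=
  (1 / (2 ^ n * (n.factorial : ℝ))) * iteratedDeriv n (fun s : ℝ => (s ^ 2 - 1) ^ n) t

/-- The inverse of `χ_n` on the half-axis `[1, +∞)`. -/
def legendreInv (n : ℕ) (y : ℝ) : ℝ :=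
  Function.invFunOn (legendreChi n) (Set.Ici 1) y

/-- `ν_n`: the maximal volume of an `n`-dimensional simplex contained in `Q_n`. -/
def maxSimplexVol (n : ℕ) : ℝ :=
  sSup {t : ℝ | ∃ v : Fin (n + 1) → EuclideanSpace ℝ (Fin n),
    AffineIndependent ℝ v ∧ simplexSet v ⊆ unitCube n ∧
    t = (volume (simplexSet v)).toReal}

/-- `h_n`: the maximal determinant of an `n×n` matrix with entries in `{0,1}`. -/
def maxDet01 (n : ℕ) : ℝ :=
  sSup {d : ℝ | ∃ M : Matrix (Fin n) (Fin n) ℝ,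
    (∀ i j, M i j = 0 ∨ M i j = 1) ∧ d = M.det}

/-- `σ_n`: the volume of a regular `n`-dimensional simplex inscribed into `B_n`. -/
def regSimplexVol (n : ℕ) : ℝ :=
  sSup {t : ℝ | ∃ v : Fin (n + 1) → EuclideanSpace ℝ (Fin n),
    AffineIndependent ℝ v ∧ (∃ e : ℝ, ∀ j k, j ≠ k → dist (v j) (v k) = e) ∧
    (∀ j, ‖v j‖ = 1) ∧ t = (volume (simplexSet v)).toReal}

end

/-!
Write `λ_j(x) = ∑ᵢ l_{ij} xᵢ + λ_j(0)` for the barycentric coordinates of `S`. A translate of `σS`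
is exactly a set `{x | ∀ j, m_j ≤ λ_j(x)}` with `∑ⱼ m_j = 1 - σ`, and the minimum of `λ_j` over
`Q_n` is `λ_j(0) - ∑ᵢ (l_{ij})⁻`; summing over `j` gives `α(S) = ∑_{i,j} (l_{ij})⁻`. A segment
`[x, x + t eᵢ]` lies in `S` iff `λ_j(x) ≥ 0` and `λ_j(x) + t l_{ij} ≥ 0` for all `j`, and summing
these over `j` shows that the longest one has `t = 1 / ∑ⱼ (l_{ij})⁻`, so `α(S) = ∑ᵢ 1/dᵢ(S)`.
Since `S ⊆ Q_n` forces `dᵢ(S) ≤ 1`, `α(S) ≥ n`; and `ξ(S) ≥ α(S)` because `σS` is a translate of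
itself. If `ξ(S) = n` the sum `∑ᵢ 1/dᵢ(S)` of terms `≥ 1` equals `n`, so every `dᵢ(S) = 1`.
-/

noncomputable section

section Cube

variable {n : ℕ}

theorem linearMap_apply_eq_sum_mul (L : EuclideanSpace ℝ (Fin n) →ₗ[ℝ] ℝ)
    (y : EuclideanSpace ℝ (Fin n)) :
    L y = ∑ i, y i * L (EuclideanSpace.single i 1) := by
  conv_lhs => rw [← (EuclideanSpace.basisFun (Fin n) ℝ).sum_repr y]
  simp [EuclideanSpace.basisFun_apply]

theorem neg_sum_negPart_le_of_mem_unitCube (L : EuclideanSpace ℝ (Fin n) →ₗ[ℝ] ℝ)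
    {y : EuclideanSpace ℝ (Fin n)} (hy : y ∈ unitCube n) :
    -∑ i, (L (EuclideanSpace.single i 1))⁻ ≤ L y := by
  rw [linearMap_apply_eq_sum_mul, ← Finset.sum_neg_distrib]
  refine Finset.sum_le_sum fun i _ => ?_
  obtain ⟨h0, h1⟩ := hy i
  set c := L (EuclideanSpace.single i 1)
  rcases le_total c 0 with hc | hc
  · rw [negPart_eq_neg.2 hc]; nlinarith
  · rw [negPart_eq_zero.2 hc, neg_zero]; exact mul_nonneg h0 hc

theorem exists_mem_unitCube_eq_neg_sum_negPart (L : EuclideanSpace ℝ (Fin n) →ₗ[ℝ] ℝ) :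
    ∃ y ∈ unitCube n, L y = -∑ i, (L (EuclideanSpace.single i 1))⁻ := by
  classical
  refine ⟨WithLp.toLp 2 fun i => if L (EuclideanSpace.single i 1) < 0 then 1 else 0,
    fun i => ?_, ?_⟩
  · dsimp only
    split_ifs <;> norm_num
  · rw [linearMap_apply_eq_sum_mul, ← Finset.sum_neg_distrib]
    refine Finset.sum_congr rfl fun i _ => ?_
    dsimp only
    split_ifs with hc
    · rw [negPart_eq_neg.2 hc.le]; ring
    · rw [negPart_eq_zero.2 (not_lt.1 hc)]; ring

theorem forall_mem_unitCube_le_iff (f : EuclideanSpace ℝ (Fin n) →ᵃ[ℝ] ℝ) (m : ℝ) :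
    (∀ y ∈ unitCube n, m ≤ f y) ↔
      m ≤ f 0 - ∑ i, (f.linear (EuclideanSpace.single i 1))⁻ := by
  have hf : ∀ y, f y = f.linear y + f 0 := fun y => by simpa using f.map_vadd 0 y
  constructor
  · intro h
    obtain ⟨y, hy, hLy⟩ := exists_mem_unitCube_eq_neg_sum_negPart f.linear
    linarith [h y hy, hf y]
  · intro h y hy
    linarith [neg_sum_negPart_le_of_mem_unitCube f.linear hy, hf y]

theorem axialDiameter_le_one {S : Set (EuclideanSpace ℝ (Fin n))} (hS : S ⊆ unitCube n)
    (hne : S.Nonempty) (i : Fin n) : axialDiameter i S ≤ 1 := by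
  obtain ⟨x₀, hx₀⟩ := hne
  refine csSup_le ⟨0, le_rfl, x₀, hx₀, by simpa using hx₀⟩ ?_
  rintro t ⟨-, x, hx, hxt⟩
  have h0 := (hS hx i).1
  have h1 := (hS hxt i).2
  simp at h1
  linarith

end Cube

theorem mem_homothet_iff {n : ℕ} {c y : EuclideanSpace ℝ (Fin n)} {σ : ℝ}
    {S : Set (EuclideanSpace ℝ (Fin n))} (hσ : σ ≠ 0) :
    y ∈ homothet c σ S ↔ AffineMap.homothety c σ⁻¹ y ∈ S := by
  have hhom : ∀ x, c + σ • (x - c) = AffineMap.homothety c σ x := fun x => by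
    rw [AffineMap.homothety_apply, vsub_eq_sub, vadd_eq_add, add_comm]
  simp only [homothet, Set.mem_image, hhom]
  constructor
  · rintro ⟨x, hx, rfl⟩
    rwa [← AffineMap.homothety_mul_apply, inv_mul_cancel₀ hσ, AffineMap.homothety_one,
      AffineMap.id_apply]
  · intro hy
    refine ⟨_, hy, ?_⟩
    rw [← AffineMap.homothety_mul_apply, mul_inv_cancel₀ hσ, AffineMap.homothety_one,
      AffineMap.id_apply]

theorem exists_le_sum_eq_iff {ι : Type*} [Fintype ι] [Nonempty ι] (g : ι → ℝ) (s : ℝ) :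
    (∃ m : ι → ℝ, (∀ j, m j ≤ g j) ∧ ∑ j, m j = s) ↔ s ≤ ∑ j, g j := by
  constructor
  · rintro ⟨m, hm, rfl⟩
    exact Finset.sum_le_sum fun j _ => hm j
  · intro hs
    have hcard : (0 : ℝ) < Fintype.card ι := by exact_mod_cast Fintype.card_pos
    refine ⟨fun j => g j - (∑ k, g k - s) / Fintype.card ι, fun j => ?_, ?_⟩
    · have : 0 ≤ (∑ k, g k - s) / Fintype.card ι := div_nonneg (by linarith) hcard.le
      linarith
    · rw [Finset.sum_sub_distrib, Finset.sum_const, Finset.card_univ, nsmul_eq_mul,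
        mul_div_cancel₀ _ hcard.ne']
      ring

theorem sum_div_natCast_succ {n : ℕ} (a : ℝ) : ∑ _j : Fin (n + 1), a / (n + 1) = a := by
  rw [Finset.sum_const, Finset.card_univ, Fintype.card_fin, nsmul_eq_mul]
  push_cast
  field_simp

theorem alphaInd_le_xiInd {n : ℕ} (Ω : Set (EuclideanSpace ℝ (Fin n)))
    (v : Fin (n + 1) → EuclideanSpace ℝ (Fin n))
    (h : ∃ σ, 1 ≤ σ ∧ Ω ⊆ simplexHomothet v σ) : alphaInd Ω v ≤ xiInd Ω v := by
  refine csInf_le_csInf ⟨0, fun σ hσ => hσ.1.le⟩ h ?_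
  rintro σ ⟨hσ, hΩ⟩
  exact ⟨by linarith, 0, by simpa using hΩ⟩

theorem exists_affineBasis_coe_eq {n : ℕ} {v : Fin (n + 1) → EuclideanSpace ℝ (Fin n)}
    (hv : AffineIndependent ℝ v) :
    ∃ b : AffineBasis (Fin (n + 1)) ℝ (EuclideanSpace ℝ (Fin n)), ⇑b = v :=
  ⟨⟨v, hv, by rw [hv.affineSpan_eq_top_iff_card_eq_finrank_add_one]; simp⟩, rfl⟩

namespace AffineBasis

variable {ι k V : Type*} [Ring k] [AddCommGroup V] [Module k V]
  (b : AffineBasis ι k V)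

theorem coord_add (j : ι) (u x : V) :
    b.coord j (u + x) = (b.coord j).linear u + b.coord j x := by
  simpa using (b.coord j).map_vadd x u

theorem sum_coord_linear [Fintype ι] (u : V) : ∑ j, (b.coord j).linear u = 0 := by
  have h := Finset.sum_congr rfl fun j (_ : j ∈ Finset.univ) => b.coord_add j u 0
  rwa [Finset.sum_add_distrib, b.sum_coord_apply_eq_one, b.sum_coord_apply_eq_one,
    right_eq_add] at h

theorem exists_coord_eq [Fintype ι] (w : ι → k) (hw : ∑ j, w j = 1) :
    ∃ x, ∀ j, b.coord j x = w j :=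
  ⟨Finset.univ.affineCombination k b w, fun j =>
    b.coord_apply_combination_of_mem (Finset.mem_univ j) hw⟩

theorem exists_coord_linear_eq [Fintype ι] (d : ι → k) (hd : ∑ j, d j = 0) :
    ∃ t, ∀ j, (b.coord j).linear t = d j := by
  obtain ⟨t, ht⟩ := b.exists_coord_eq (fun j => d j + b.coord j 0) (by
    rw [Finset.sum_add_distrib, hd, b.sum_coord_apply_eq_one, zero_add])
  refine ⟨t, fun j => ?_⟩
  have := b.coord_add j t 0
  rwa [add_zero, ht, add_left_inj, eq_comm] at this

end AffineBasis

section Simplex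

variable {n : ℕ} (b : AffineBasis (Fin (n + 1)) ℝ (EuclideanSpace ℝ (Fin n)))

theorem mem_simplexSet_iff {x : EuclideanSpace ℝ (Fin n)} :
    x ∈ simplexSet b ↔ ∀ j, 0 ≤ b.coord j x := by
  rw [simplexSet, b.convexHull_eq_nonneg_coord]
  rfl

theorem coord_simplexCentroid (j : Fin (n + 1)) :
    b.coord j (simplexCentroid b) = 1 / (n + 1) := by
  rw [simplexCentroid, b.coord_apply_centroid (Finset.mem_univ j)]
  simp

theorem mem_translate_simplexHomothet_iff {σ : ℝ} (hσ : 0 < σ) (t y : EuclideanSpace ℝ (Fin n)) :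
    y ∈ (fun x => t + x) '' simplexHomothet b σ ↔
      ∀ j, (1 - σ) / (n + 1) + (b.coord j).linear t ≤ b.coord j y := by
  rw [Set.image_add_left, Set.mem_preimage, simplexHomothet, mem_homothet_iff hσ.ne',
    mem_simplexSet_iff]
  refine forall_congr' fun j => ?_
  rw [AffineMap.homothety_eq_lineMap, AffineMap.apply_lineMap, AffineMap.lineMap_apply_ring,
    coord_simplexCentroid, b.coord_add, map_neg]
  have hrw : (1 - σ⁻¹) * (1 / (n + 1)) + σ⁻¹ * (-(b.coord j).linear t + b.coord j y) =
      σ⁻¹ * (b.coord j y - ((1 - σ) / (n + 1) + (b.coord j).linear t)) := by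
    field_simp
    ring
  rw [hrw, mul_nonneg_iff_of_pos_left (inv_pos.2 hσ), sub_nonneg]

theorem exists_subset_translate_simplexHomothet_iff (Ω : Set (EuclideanSpace ℝ (Fin n)))
    {σ : ℝ} (hσ : 0 < σ) :
    (∃ t, Ω ⊆ (fun x => t + x) '' simplexHomothet b σ) ↔
      ∃ m : Fin (n + 1) → ℝ, (∀ j, ∀ y ∈ Ω, m j ≤ b.coord j y) ∧ ∑ j, m j = 1 - σ := by
  simp only [Set.subset_def, mem_translate_simplexHomothet_iff b hσ]
  constructor
  · rintro ⟨t, ht⟩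
    refine ⟨fun j => (1 - σ) / (n + 1) + (b.coord j).linear t, fun j y hy => ht y hy j, ?_⟩
    rw [Finset.sum_add_distrib, b.sum_coord_linear, sum_div_natCast_succ, add_zero]
  · rintro ⟨m, hm, hsum⟩
    obtain ⟨t, ht⟩ := b.exists_coord_linear_eq (fun j => m j - (1 - σ) / (n + 1)) (by
      rw [Finset.sum_sub_distrib, hsum, sum_div_natCast_succ, sub_self])
    exact ⟨t, fun y hy j => by rw [ht]; linarith [hm j y hy]⟩

theorem subset_simplexHomothet_iff (Ω : Set (EuclideanSpace ℝ (Fin n))) {σ : ℝ} (hσ : 0 < σ) :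
    Ω ⊆ simplexHomothet b σ ↔ ∀ j, ∀ y ∈ Ω, (1 - σ) / (n + 1) ≤ b.coord j y := by
  have h := mem_translate_simplexHomothet_iff b hσ 0
  simp only [zero_add, Set.image_id', map_zero, add_zero] at h
  simp only [Set.subset_def, h]
  exact ⟨fun h j y hy => h y hy j, fun h y hy j => h j y hy⟩

/-- The coefficient `l_{ij}` of `x_i` in the barycentric coordinate `λ_j`. -/
def coordCoeff (j : Fin (n + 1)) (i : Fin n) : ℝ :=
  (b.coord j).linear (EuclideanSpace.single i 1)

/-- Equal to `½ ∑ⱼ |l_{ij}|`, since `∑ⱼ l_{ij} = 0`. -/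
def negCoeffSum (i : Fin n) : ℝ :=
  ∑ j, (coordCoeff b j i)⁻

theorem negCoeffSum_pos (i : Fin n) : 0 < negCoeffSum b i := by
  by_contra! h
  have hneg := (Finset.sum_eq_zero_iff_of_nonneg fun j _ => negPart_nonneg _).1
    (le_antisymm h (Finset.sum_nonneg fun j _ => negPart_nonneg (coordCoeff b j i)))
  have hzero := (Finset.sum_eq_zero_iff_of_nonneg fun j _ =>
    negPart_eq_zero.1 (hneg j (Finset.mem_univ j))).1 (b.sum_coord_linear _)
  have hsingle : EuclideanSpace.single i (1 : ℝ) = 0 := b.ext_elem fun j => by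
    rw [← add_zero (EuclideanSpace.single i (1 : ℝ)), b.coord_add,
      show (b.coord j).linear (EuclideanSpace.single i 1) = 0 from hzero j (Finset.mem_univ j),
      zero_add]
  simpa using congrArg (· i) hsingle

theorem mem_axialSegments_simplexSet_iff (i : Fin n) (t : ℝ) :
    (0 ≤ t ∧ ∃ x, x ∈ simplexSet b ∧ x + t • EuclideanSpace.single i 1 ∈ simplexSet b) ↔
      0 ≤ t ∧ t * negCoeffSum b i ≤ 1 := by
  have hshift : ∀ x j, b.coord j (x + t • EuclideanSpace.single i 1) =
      t * coordCoeff b j i + b.coord j x := fun x j => by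
    rw [add_comm x, b.coord_add, map_smul, smul_eq_mul, coordCoeff]
  simp only [mem_simplexSet_iff, hshift]
  refine and_congr_right fun ht => ⟨?_, fun htA => ?_⟩
  · rintro ⟨x, hx, hxt⟩
    calc t * negCoeffSum b i = ∑ j, max (t * -coordCoeff b j i) (t * 0) := by
          simp only [negCoeffSum, Finset.mul_sum, negPart_def, mul_max_of_nonneg _ _ ht]
      _ ≤ ∑ j, b.coord j x := Finset.sum_le_sum fun j _ =>
          max_le (by linarith [hxt j]) (by linarith [hx j])
      _ = 1 := b.sum_coord_apply_eq_one x
  · obtain ⟨x, hx⟩ := b.exists_coord_eq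
      (fun j => t * (coordCoeff b j i)⁻ + (1 - t * negCoeffSum b i) / (n + 1)) (by
        rw [Finset.sum_add_distrib, ← Finset.mul_sum, sum_div_natCast_succ, negCoeffSum,
          add_sub_cancel])
    have hslack : 0 ≤ (1 - t * negCoeffSum b i) / (n + 1) := by
      apply div_nonneg <;> [linarith; positivity]
    refine ⟨x, fun j => ?_, fun j => ?_⟩
    · rw [hx]
      have := mul_nonneg ht (negPart_nonneg (coordCoeff b j i))
      linarith
    · have hpos : t * coordCoeff b j i + t * (coordCoeff b j i)⁻ = t * (coordCoeff b j i)⁺ := by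
        linear_combination (-t) * posPart_sub_negPart (coordCoeff b j i)
      rw [hx]
      linarith [mul_nonneg ht (posPart_nonneg (coordCoeff b j i))]

theorem axialDiameter_simplexSet (i : Fin n) :
    axialDiameter i (simplexSet b) = 1 / negCoeffSum b i := by
  have hA := negCoeffSum_pos b i
  have hset : {t : ℝ | 0 ≤ t ∧ ∃ x, x ∈ simplexSet b ∧
      x + t • EuclideanSpace.single i 1 ∈ simplexSet b} = Set.Icc 0 (1 / negCoeffSum b i) := by
    ext t
    rw [Set.mem_ofPred_eq, mem_axialSegments_simplexSet_iff, Set.mem_Icc, le_div_iff₀ hA]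
  rw [axialDiameter, hset, csSup_Icc (by positivity)]

theorem one_le_negCoeffSum (hsub : simplexSet b ⊆ unitCube n) (i : Fin n) :
    1 ≤ negCoeffSum b i := by
  have h := axialDiameter_le_one hsub ⟨b 0, subset_convexHull ℝ _ (Set.mem_range_self 0)⟩ i
  rwa [axialDiameter_simplexSet, div_le_one (negCoeffSum_pos b i)] at h

theorem alphaInd_unitCube (hn : 0 < n) :
    alphaInd (unitCube n) b = ∑ i, negCoeffSum b i := by
  have hpos : 0 < ∑ i, negCoeffSum b i :=
    Finset.sum_pos (fun i _ => negCoeffSum_pos b i) ⟨⟨0, hn⟩, Finset.mem_univ _⟩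
  have hmin : ∑ j, (b.coord j 0 - ∑ i, ((b.coord j).linear (EuclideanSpace.single i 1))⁻) =
      1 - ∑ i, negCoeffSum b i := by
    rw [Finset.sum_sub_distrib, b.sum_coord_apply_eq_one, Finset.sum_comm]
    rfl
  have hiff : ∀ σ, 0 < σ →
      ((∃ t, unitCube n ⊆ (fun x => t + x) '' simplexHomothet b σ) ↔
        ∑ i, negCoeffSum b i ≤ σ) := fun σ hσ => by
    simp only [exists_subset_translate_simplexHomothet_iff b _ hσ,
      forall_mem_unitCube_le_iff, exists_le_sum_eq_iff, hmin]
    constructor <;> intro h <;> linarith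
  have hset : {σ : ℝ | 0 < σ ∧ ∃ t, unitCube n ⊆ (fun x => t + x) '' simplexHomothet b σ} =
      Set.Ici (∑ i, negCoeffSum b i) := by
    ext σ
    simp only [Set.mem_ofPred_eq, Set.mem_Ici]
    exact ⟨fun ⟨hσ, h⟩ => (hiff σ hσ).1 h,
      fun h => ⟨hpos.trans_le h, (hiff σ (hpos.trans_le h)).2 h⟩⟩
  rw [alphaInd, hset, csInf_Ici]

theorem exists_unitCube_subset_simplexHomothet :
    ∃ σ, 1 ≤ σ ∧ unitCube n ⊆ simplexHomothet b σ := by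
  set g := fun j => b.coord j 0 - ∑ i, ((b.coord j).linear (EuclideanSpace.single i 1))⁻
  have hg : 0 ≤ ∑ j, |g j| := Finset.sum_nonneg fun j _ => abs_nonneg _
  have hn : (0 : ℝ) < n + 1 := by positivity
  refine ⟨1 + (n + 1) * ∑ j, |g j|, by nlinarith, ?_⟩
  rw [subset_simplexHomothet_iff b _ (by nlinarith)]
  intro j
  rw [forall_mem_unitCube_le_iff]
  have hj : |g j| ≤ ∑ j, |g j| :=
    Finset.single_le_sum (fun j _ => abs_nonneg (g j)) (Finset.mem_univ j)
  have : (1 - (1 + (n + 1) * ∑ j, |g j|)) / (n + 1) = -∑ j, |g j| := by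
    field_simp
    ring
  rw [this]
  linarith [neg_abs_le (g j)]

theorem alphaInd_unitCube_le_xiInd : alphaInd (unitCube n) b ≤ xiInd (unitCube n) b :=
  alphaInd_le_xiInd _ _ (exists_unitCube_subset_simplexHomothet b)

theorem natCast_le_alphaInd_unitCube (hn : 0 < n) (hsub : simplexSet b ⊆ unitCube n) :
    (n : ℝ) ≤ alphaInd (unitCube n) b := by
  rw [alphaInd_unitCube b hn]
  simpa using Finset.sum_le_sum fun i (_ : i ∈ Finset.univ) => one_le_negCoeffSum b hsub i

theorem axialDiameter_eq_one_of_alphaInd_unitCube_eq (hn : 0 < n)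
    (hsub : simplexSet b ⊆ unitCube n) (hα : alphaInd (unitCube n) b = n) (i : Fin n) :
    axialDiameter i (simplexSet b) = 1 := by
  rw [alphaInd_unitCube b hn] at hα
  have hone := (Finset.sum_eq_sum_iff_of_le fun i (_ : i ∈ Finset.univ) =>
    one_le_negCoeffSum b hsub i).1 (by simpa using hα.symm)
  rw [axialDiameter_simplexSet, ← hone i (Finset.mem_univ i), div_one]

end Simplex

end

/-- For a nondegenerate simplex `S ⊆ Q_n`:
`n ≤ Σ_i 1/d_i(S) = α(S) ≤ ξ(S)`; in particular `ξ_n ≥ n`; and if `ξ(S) = n` then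
`α(S) = n` and all `d_i(S) = 1`. -/
theorem alpha_xi_ge_dim (n : ℕ) (hn : 0 < n)
    (v : Fin (n + 1) → EuclideanSpace ℝ (Fin n)) (hv : AffineIndependent ℝ v)
    (hsub : simplexSet v ⊆ unitCube n) :
    (n : ℝ) ≤ ∑ i : Fin n, 1 / axialDiameter i (simplexSet v) ∧
    (∑ i : Fin n, 1 / axialDiameter i (simplexSet v)) = alphaInd (unitCube n) v ∧
    alphaInd (unitCube n) v ≤ xiInd (unitCube n) v ∧
    (n : ℝ) ≤ xiMin n ∧
    (xiInd (unitCube n) v = n →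
      alphaInd (unitCube n) v = n ∧ ∀ i, axialDiameter i (simplexSet v) = 1) := by
  obtain ⟨b, rfl⟩ := exists_affineBasis_coe_eq hv
  have hsum : ∑ i, 1 / axialDiameter i (simplexSet b) = alphaInd (unitCube n) b := by
    simp only [axialDiameter_simplexSet, one_div_one_div, alphaInd_unitCube b hn]
  have hnα := natCast_le_alphaInd_unitCube b hn hsub
  refine ⟨hsum ▸ hnα, hsum, alphaInd_unitCube_le_xiInd b, ?_, fun hξ => ?_⟩
  · refine le_csInf ⟨_, b, hv, hsub, rfl⟩ ?_
    rintro _ ⟨v', hv', hsub', rfl⟩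
    obtain ⟨b', rfl⟩ := exists_affineBasis_coe_eq hv'
    exact (natCast_le_alphaInd_unitCube b' hn hsub').trans (alphaInd_unitCube_le_xiInd b')
  · have hαn : alphaInd (unitCube n) b = n :=
      le_antisymm (hξ ▸ alphaInd_unitCube_le_xiInd b) hnα
    exact ⟨hαn, axialDiameter_eq_one_of_alphaInd_unitCube_eq b hn hsub hαn⟩
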